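/- Fix real matrices A (n×n), B (n×m), a horizon T ≥ 1, a real δ ∈ [0,1), and sequences (Q_t)_{t∈ℕ} of symmetric positive definite n×n matrices and (R_t)_{t∈ℕ} of symmetric positive definite m×m matrices satisfying (1−δ)Q_t ⪯ Q_{t+1} and (1−δ)R_t ⪯ R_{t+1} for all t. For weights (Q,R) let P_k(Q,R) be the Riccati iterates with P_0 = 0 and P_{k+1} = AᵀP_kA − AᵀP_kB(BᵀP_kB+R)⁻¹BᵀP_kA + Q. Then for every t ∈ ℕ, every state x_t ∈ ℝⁿ, and every control sequence u_t, u_{t+1}, …, u_{t+T−1} ∈ ℝᵐ with trajectory x_{k+1} = Ax_k + Bu_k, one has ∑_{k=t}^{t+T−1} (x_kᵀQ_kx_k + u_kᵀR_ku_k) ≥ (1−δ)^{T−1} · x_tᵀP_T(Q_t,R_t)x_t. -/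

import Mathlib

open Matrix

/-- The finite-horizon Riccati iteration with `P 0 = 0` and
`P (k+1) = AᵀP_kA − AᵀP_kB(BᵀP_kB+R)⁻¹BᵀP_kA + Q`. -/
noncomputable def riccati {n m : ℕ} (A : Matrix (Fin n) (Fin n) ℝ)
    (B : Matrix (Fin n) (Fin m) ℝ) (Q : Matrix (Fin n) (Fin n) ℝ)
    (R : Matrix (Fin m) (Fin m) ℝ) : ℕ → Matrix (Fin n) (Fin n) ℝ
  | 0 => 0
  | k + 1 =>
      Aᵀ * riccati A B Q R k * A -
        Aᵀ * riccati A B Q R k * B * (Bᵀ * riccati A B Q R k * B + R)⁻¹ *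
          Bᵀ * riccati A B Q R k * A + Q

/-- The Loewner order on real square matrices: `X ⪯ Y` iff `Y − X` is positive semidefinite. -/
def loewnerLE {n : ℕ} (X Y : Matrix (Fin n) (Fin n) ℝ) : Prop := (Y - X).PosSemidef

/-!
Completing the square in `u` (the Schur complement of the block matrix `stageCostMatrix`) shows
that the Riccati map `𝓡` satisfies `xᵀ𝓡(P)x ≤ xᵀQx + uᵀRu + (Ax+Bu)ᵀP(Ax+Bu)`. Inducting over the
window, `x_tᵀP_T(Q₀,R₀)x_t` is at most the cost of any trajectory whose weights dominate `(Q₀,R₀)`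
on the window. The rate constraints give this domination for `(Q₀,R₀) = (1−δ)^{T−1}(Q_t,R_t)`, and
`P_T` is homogeneous of degree one in the weights.
-/

-- In this order `X ≤ Y` unfolds to `loewnerLE X Y`.
open scoped MatrixOrder

lemma Matrix.inv_smul_of_ne_zero {ι 𝕜 : Type*} [Fintype ι] [DecidableEq ι] [Field 𝕜]
    (M : Matrix ι ι 𝕜) {c : 𝕜} (hc : c ≠ 0) : (c • M)⁻¹ = c⁻¹ • M⁻¹ := by
  by_cases hM : IsUnit M.det
  · exact inv_smul' M (Units.mk0 c hc) hM
  · have hcM : ¬IsUnit (c • M).det := by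
      simpa [isUnit_iff_ne_zero, det_smul, hc] using hM
    rw [nonsing_inv_apply_not_isUnit _ hM, nonsing_inv_apply_not_isUnit _ hcM, smul_zero]

lemma Matrix.dotProduct_mulVec_le_of_le {ι : Type*} [Fintype ι] {X Y : Matrix ι ι ℝ}
    (h : X ≤ Y) (x : ι → ℝ) : x ⬝ᵥ (X *ᵥ x) ≤ x ⬝ᵥ (Y *ᵥ x) := by
  have := (le_iff.mp h).dotProduct_mulVec_nonneg x
  rw [star_trivial, sub_mulVec, dotProduct_sub, sub_nonneg] at this
  exact this

lemma Matrix.dotProduct_transpose_mul_mul_mulVec {ι α β : Type*} [Fintype ι] [Fintype α]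
    [Fintype β] (M : Matrix ι α ℝ) (P : Matrix ι ι ℝ) (N : Matrix ι β ℝ) (v : α → ℝ)
    (w : β → ℝ) : v ⬝ᵥ ((Mᵀ * P * N) *ᵥ w) = (M *ᵥ v) ⬝ᵥ (P *ᵥ (N *ᵥ w)) := by
  rw [← mulVec_mulVec, ← mulVec_mulVec, dotProduct_mulVec, vecMul_transpose]

lemma Matrix.conjTranspose_transpose_mul_mul {ι α β : Type*} [Fintype ι]
    (M : Matrix ι α ℝ) {P : Matrix ι ι ℝ} (hP : P.IsHermitian) (N : Matrix ι β ℝ) :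
    (Mᵀ * P * N)ᴴ = Nᵀ * P * M := by
  have hPt : Pᵀ = P := by simpa using hP.eq
  rw [conjTranspose_eq_transpose_of_trivial, transpose_mul, transpose_mul, transpose_transpose,
    hPt, Matrix.mul_assoc]

section StageCost

variable {ι κ : Type*} [Fintype ι] [Fintype κ]
  (A : Matrix ι ι ℝ) (B : Matrix ι κ ℝ) (Q : Matrix ι ι ℝ) (R : Matrix κ κ ℝ)
  {P : Matrix ι ι ℝ}

def stageCostMatrix (P : Matrix ι ι ℝ) : Matrix (ι ⊕ κ) (ι ⊕ κ) ℝ :=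
  fromBlocks (Aᵀ * P * A + Q) (Aᵀ * P * B) (Aᵀ * P * B)ᴴ (Bᵀ * P * B + R)

lemma sumElim_dotProduct_stageCostMatrix_mulVec (hP : P.IsHermitian) (x : ι → ℝ)
    (u : κ → ℝ) :
    (x ⊕ᵥ u) ⬝ᵥ (stageCostMatrix A B Q R P *ᵥ (x ⊕ᵥ u)) =
      x ⬝ᵥ (Q *ᵥ x) + u ⬝ᵥ (R *ᵥ u) + (A *ᵥ x + B *ᵥ u) ⬝ᵥ (P *ᵥ (A *ᵥ x + B *ᵥ u)) := by
  simp only [stageCostMatrix, conjTranspose_transpose_mul_mul _ hP, fromBlocks_mulVec,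
    Sum.elim_comp_inl, Sum.elim_comp_inr, sumElim_dotProduct_sumElim, add_mulVec,
    mulVec_add, dotProduct_add, add_dotProduct, dotProduct_transpose_mul_mul_mulVec]
  ring

lemma posSemidef_stageCostMatrix (hP : P.PosSemidef) (hQ : Q.PosSemidef) (hR : R.PosSemidef) :
    (stageCostMatrix A B Q R P).PosSemidef := by
  refine PosSemidef.of_dotProduct_mulVec_nonneg ?_ fun z ↦ ?_
  · refine IsHermitian.fromBlocks (IsHermitian.add ?_ hQ.isHermitian) rfl
      (IsHermitian.add ?_ hR.isHermitian)
    · simpa using isHermitian_conjTranspose_mul_mul A hP.isHermitian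
    · simpa using isHermitian_conjTranspose_mul_mul B hP.isHermitian
  · rw [← Sum.elim_comp_inl_inr z, star_trivial,
      sumElim_dotProduct_stageCostMatrix_mulVec A B Q R hP.isHermitian]
    have hQz := hQ.dotProduct_mulVec_nonneg (z ∘ Sum.inl)
    have hRz := hR.dotProduct_mulVec_nonneg (z ∘ Sum.inr)
    have hPz := hP.dotProduct_mulVec_nonneg (A *ᵥ (z ∘ Sum.inl) + B *ᵥ (z ∘ Sum.inr))
    simp only [star_trivial] at hQz hRz hPz
    linarith

lemma posDef_transpose_mul_mul_add (hP : P.PosSemidef) (hR : R.PosDef) :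
    (Bᵀ * P * B + R).PosDef :=
  hR.posSemidef_add (by simpa using hP.conjTranspose_mul_mul_same B)

variable [DecidableEq κ]

noncomputable def riccatiMap (P : Matrix ι ι ℝ) : Matrix ι ι ℝ :=
  Aᵀ * P * A - Aᵀ * P * B * (Bᵀ * P * B + R)⁻¹ * Bᵀ * P * A + Q

lemma riccatiMap_eq_schurComplement (hP : P.IsHermitian) :
    riccatiMap A B Q R P = Aᵀ * P * A + Q - Aᵀ * P * B * (Bᵀ * P * B + R)⁻¹ * (Aᵀ * P * B)ᴴ := by
  rw [riccatiMap, conjTranspose_transpose_mul_mul _ hP]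
  simp only [Matrix.mul_assoc]
  abel

lemma dotProduct_riccatiMap_mulVec_le (hP : P.IsHermitian) (hS : (Bᵀ * P * B + R).PosDef)
    (x : ι → ℝ) (u : κ → ℝ) :
    x ⬝ᵥ (riccatiMap A B Q R P *ᵥ x) ≤
      x ⬝ᵥ (Q *ᵥ x) + u ⬝ᵥ (R *ᵥ u) + (A *ᵥ x + B *ᵥ u) ⬝ᵥ (P *ᵥ (A *ᵥ x + B *ᵥ u)) := by
  let _ := hS.isUnit.invertible
  have hschur := schur_complement_eq₂₂ (Aᵀ * P * A + Q) (Aᵀ * P * B) x u hS.isHermitian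
  simp only [star_trivial, ← dotProduct_mulVec, ← riccatiMap_eq_schurComplement _ _ _ _ hP]
    at hschur
  rw [← sumElim_dotProduct_stageCostMatrix_mulVec A B Q R hP, stageCostMatrix, hschur]
  have := hS.posSemidef.dotProduct_mulVec_nonneg (((Bᵀ * P * B + R)⁻¹ * (Aᵀ * P * B)ᴴ) *ᵥ x + u)
  rw [star_trivial] at this
  linarith

lemma posSemidef_riccatiMap (hP : P.PosSemidef) (hQ : Q.PosSemidef) (hR : R.PosDef) :
    (riccatiMap A B Q R P).PosSemidef := by
  have hS := posDef_transpose_mul_mul_add B R hP hR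
  let _ := hS.isUnit.invertible
  rw [riccatiMap_eq_schurComplement _ _ _ _ hP.isHermitian, ← PosDef.fromBlocks₂₂ _ _ hS]
  exact posSemidef_stageCostMatrix A B Q R hP hQ hR.posSemidef

end StageCost

section Riccati

variable {n m : ℕ} (A : Matrix (Fin n) (Fin n) ℝ) (B : Matrix (Fin n) (Fin m) ℝ)
  (Q : Matrix (Fin n) (Fin n) ℝ) (R : Matrix (Fin m) (Fin m) ℝ)

lemma riccati_succ (k : ℕ) : riccati A B Q R (k + 1) = riccatiMap A B Q R (riccati A B Q R k) :=
  rfl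

lemma posSemidef_riccati (hQ : Q.PosSemidef) (hR : R.PosDef) (k : ℕ) :
    (riccati A B Q R k).PosSemidef := by
  induction k with
  | zero => exact PosSemidef.zero
  | succ k ih => exact posSemidef_riccatiMap A B Q R ih hQ hR

lemma riccati_smul {c : ℝ} (hc : c ≠ 0) (k : ℕ) :
    riccati A B (c • Q) (c • R) k = c • riccati A B Q R k := by
  induction k with
  | zero => simp [riccati]
  | succ k ih =>
    have hgain : Bᵀ * (c • riccati A B Q R k) * B + c • R =
        c • (Bᵀ * riccati A B Q R k * B + R) := by
      rw [Matrix.mul_smul, Matrix.smul_mul, smul_add]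
    rw [riccati_succ, riccati_succ, ih, riccatiMap, riccatiMap, hgain, inv_smul_of_ne_zero _ hc]
    simp only [Matrix.mul_smul, Matrix.smul_mul, smul_smul, smul_sub, smul_add,
      mul_inv_cancel_left₀ hc]

lemma dotProduct_riccati_mulVec_le_sum {Q₀ : Matrix (Fin n) (Fin n) ℝ}
    {R₀ : Matrix (Fin m) (Fin m) ℝ} (hQ₀ : Q₀.PosSemidef) (hR₀ : R₀.PosDef)
    {Q : ℕ → Matrix (Fin n) (Fin n) ℝ} {R : ℕ → Matrix (Fin m) (Fin m) ℝ}
    {x : ℕ → Fin n → ℝ} {u : ℕ → Fin m → ℝ} (hx : ∀ k, x (k + 1) = A *ᵥ x k + B *ᵥ u k)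
    (T t : ℕ) (hQ : ∀ k ∈ Finset.Ico t (t + T), Q₀ ≤ Q k)
    (hR : ∀ k ∈ Finset.Ico t (t + T), R₀ ≤ R k) :
    x t ⬝ᵥ (riccati A B Q₀ R₀ T *ᵥ x t) ≤
      ∑ k ∈ Finset.Ico t (t + T), (x k ⬝ᵥ (Q k *ᵥ x k) + u k ⬝ᵥ (R k *ᵥ u k)) := by
  induction T generalizing t with
  | zero => simp [riccati]
  | succ T ih =>
    have hPT := posSemidef_riccati A B Q₀ R₀ hQ₀ hR₀ T
    have hS := posDef_transpose_mul_mul_add B R₀ hPT hR₀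
    have htail : Finset.Ico (t + 1) (t + 1 + T) ⊆ Finset.Ico t (t + (T + 1)) := by
      intro k; simp only [Finset.mem_Ico]; omega
    have hmem : t ∈ Finset.Ico t (t + (T + 1)) := by simp
    rw [Finset.sum_eq_sum_Ico_succ_bot (by omega), riccati_succ]
    have hstep := dotProduct_riccatiMap_mulVec_le A B Q₀ R₀ hPT.isHermitian hS (x t) (u t)
    have hrest := ih (t + 1) (fun k hk ↦ hQ k (htail hk)) (fun k hk ↦ hR k (htail hk))
    rw [← hx] at hstep
    rw [show t + 1 + T = t + (T + 1) by omega] at hrest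
    linarith [dotProduct_mulVec_le_of_le (hQ t hmem) (x t),
      dotProduct_mulVec_le_of_le (hR t hmem) (u t)]

end Riccati

lemma pow_smul_le_of_smul_le_succ {ι : Type*} [Fintype ι] {c : ℝ} (hc : 0 ≤ c)
    {Q : ℕ → Matrix ι ι ℝ} (hQ : ∀ t, c • Q t ≤ Q (t + 1)) (t j : ℕ) :
    c ^ j • Q t ≤ Q (t + j) := by
  induction j with
  | zero => simp
  | succ j ih =>
    calc c ^ (j + 1) • Q t = c • c ^ j • Q t := by rw [pow_succ', mul_smul]
      _ ≤ c • Q (t + j) := smul_le_smul_of_nonneg_left ih hc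
      _ ≤ Q (t + (j + 1)) := hQ (t + j)

lemma pow_pred_smul_le_of_mem_Ico {ι : Type*} [Fintype ι] {c : ℝ} (hc₀ : 0 ≤ c) (hc₁ : c ≤ 1)
    {Q : ℕ → Matrix ι ι ℝ} (hQ : ∀ t, c • Q t ≤ Q (t + 1)) {t T k : ℕ} (hQt : 0 ≤ Q t)
    (hk : k ∈ Finset.Ico t (t + T)) : c ^ (T - 1) • Q t ≤ Q k := by
  obtain ⟨hlo, hhi⟩ := Finset.mem_Ico.mp hk
  obtain ⟨j, rfl⟩ := Nat.exists_eq_add_of_le hlo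
  calc c ^ (T - 1) • Q t ≤ c ^ j • Q t :=
        smul_le_smul_of_nonneg_right (pow_le_pow_of_le_one hc₀ hc₁ (by omega)) hQt
    _ ≤ Q (t + j) := pow_smul_le_of_smul_le_succ hc₀ hQ t j

theorem window_cost_lower_bound_general {n m : ℕ}
    (A : Matrix (Fin n) (Fin n) ℝ) (B : Matrix (Fin n) (Fin m) ℝ)
    (T : ℕ) (δ : ℝ) (hδ0 : 0 ≤ δ) (hδ1 : δ < 1)
    (Q : ℕ → Matrix (Fin n) (Fin n) ℝ) (R : ℕ → Matrix (Fin m) (Fin m) ℝ)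
    (hQpd : ∀ t, (Q t).PosDef) (hRpd : ∀ t, (R t).PosDef)
    (hQlow : ∀ t, loewnerLE ((1 - δ) • Q t) (Q (t + 1)))
    (hRlow : ∀ t, loewnerLE ((1 - δ) • R t) (R (t + 1))) :
    ∀ (t : ℕ) (x : ℕ → Fin n → ℝ) (u : ℕ → Fin m → ℝ),
      (∀ k, x (k + 1) = A *ᵥ x k + B *ᵥ u k) →
      ∑ k ∈ Finset.Ico t (t + T), (x k ⬝ᵥ (Q k *ᵥ x k) + u k ⬝ᵥ (R k *ᵥ u k)) ≥
        (1 - δ) ^ (T - 1) * (x t ⬝ᵥ (riccati A B (Q t) (R t) T *ᵥ x t)) := by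
  intro t x u hx
  have hc : 0 < (1 - δ) ^ (T - 1) := pow_pos (by linarith) _
  have hwindow := dotProduct_riccati_mulVec_le_sum A B ((hQpd t).posSemidef.smul hc.le)
    ((hRpd t).smul hc) hx T t
    (fun k hk ↦ pow_pred_smul_le_of_mem_Ico (by linarith) (by linarith) hQlow
      (hQpd t).posSemidef.nonneg hk)
    (fun k hk ↦ pow_pred_smul_le_of_mem_Ico (by linarith) (by linarith) hRlow
      (hRpd t).posSemidef.nonneg hk)
  rwa [riccati_smul A B _ _ hc.ne', smul_mulVec, dotProduct_smul, smul_eq_mul] at hwindow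

/-- Final inequality in Appendix Lemma 2(c): any admissible cost over a window of length
`T` dominates the frozen-weight finite-horizon optimal cost up to `(1−δ)^{T−1}`. -/
theorem window_cost_lower_bound {n m : ℕ}
    (A : Matrix (Fin n) (Fin n) ℝ) (B : Matrix (Fin n) (Fin m) ℝ)
    (T : ℕ) (hT : 1 ≤ T) (δ : ℝ) (hδ0 : 0 ≤ δ) (hδ1 : δ < 1)
    (Q : ℕ → Matrix (Fin n) (Fin n) ℝ) (R : ℕ → Matrix (Fin m) (Fin m) ℝ)
    (hQpd : ∀ t, (Q t).PosDef) (hRpd : ∀ t, (R t).PosDef)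
    (hQlow : ∀ t, loewnerLE ((1 - δ) • Q t) (Q (t + 1)))
    (hRlow : ∀ t, loewnerLE ((1 - δ) • R t) (R (t + 1))) :
    ∀ (t : ℕ) (x : ℕ → Fin n → ℝ) (u : ℕ → Fin m → ℝ),
      (∀ k, x (k + 1) = A *ᵥ x k + B *ᵥ u k) →
      ∑ k ∈ Finset.Ico t (t + T), (x k ⬝ᵥ (Q k *ᵥ x k) + u k ⬝ᵥ (R k *ᵥ u k)) ≥
        (1 - δ) ^ (T - 1) * (x t ⬝ᵥ (riccati A B (Q t) (R t) T *ᵥ x t)) :=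
  window_cost_lower_bound_general A B T δ hδ0 hδ1 Q R hQpd hRpd hQlow hRlow
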